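/- arXiv:1309.4365 — 2 statements merged into one kernel-verified Lean document; each statement's English description precedes it below -/
import Mathlib

section
/- Let λ, μ : I → ℝ be differentiable with λ > 0, λ' = ((1-2d)/d)·λ·μ and μ' = 1 - μ² - d(1-d)·λ², where d ≠ 0, 1/2. Then the function t ↦ λ(t)^(2d/(1-2d))·(μ(t)² + d²·λ(t)² - 1) is constant on I. In particular, the sign of μ² + d²λ² - 1 is constant on I. -/
/-!
Along a solution, `(λ^α)' = α · ((1-2d)/d) · μ · λ^α = 2μ · λ^α` for `α = 2d/(1-2d)`, while the ODE
gives `(μ² + d²λ² - 1)' = -2μ · (μ² + d²λ² - 1)`. The two logarithmic derivatives cancel, so the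
product has derivative zero and is constant on the interval; since `λ^α > 0`, the sign of
`μ² + d²λ² - 1` is constant as well.
-/

theorem IsOpen.is_const_of_hasDerivAt_zero {s : Set ℝ} {f : ℝ → ℝ} (hs : IsOpen s)
    (hs' : IsPreconnected s) (hf : ∀ x ∈ s, HasDerivAt f 0 x) :
    ∀ x ∈ s, ∀ y ∈ s, f x = f y := fun _ hx _ hy =>
  hs.is_const_of_deriv_eq_zero hs' (fun z hz => (hf z hz).differentiableAt.differentiableWithinAt)
    (fun z hz => (hf z hz).deriv) hx hy

theorem HasDerivAt.rpow_const_of_eq_mul_self {f : ℝ → ℝ} {k t : ℝ} (p : ℝ)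
    (hf : HasDerivAt f (k * f t) t) (hpos : 0 < f t) :
    HasDerivAt (fun x => f x ^ p) (p * k * f t ^ p) t := by
  convert hf.rpow_const (p := p) (Or.inl hpos.ne') using 1
  rw [Real.rpow_sub hpos, Real.rpow_one]
  field_simp

theorem pos_iff_and_eq_zero_iff_of_mul_eq_mul {a b x y : ℝ} (ha : 0 < a) (hb : 0 < b)
    (h : a * x = b * y) : (0 < x ↔ 0 < y) ∧ (x = 0 ↔ y = 0) := by
  constructor
  · rw [← mul_pos_iff_of_pos_left ha, h, mul_pos_iff_of_pos_left hb]
  · rw [← mul_eq_zero_iff_left ha.ne', h, mul_eq_zero_iff_left hb.ne']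

theorem hasDerivAt_firstIntegral {d : ℝ} (hd0 : d ≠ 0) (hd2 : d ≠ 1 / 2) {lam mu : ℝ → ℝ}
    {t : ℝ} (hpos : 0 < lam t) (hlam : HasDerivAt lam ((1 - 2 * d) / d * lam t * mu t) t)
    (hmu : HasDerivAt mu (1 - mu t ^ 2 - d * (1 - d) * lam t ^ 2) t) :
    HasDerivAt (fun x => lam x ^ (2 * d / (1 - 2 * d)) * (mu x ^ 2 + d ^ 2 * lam x ^ 2 - 1))
      0 t := by
  have h12 : 1 - 2 * d ≠ 0 := by
    contrapose! hd2; linarith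
  have hpow : HasDerivAt (fun x => lam x ^ (2 * d / (1 - 2 * d)))
      (2 * mu t * lam t ^ (2 * d / (1 - 2 * d))) t := by
    have hlam' : HasDerivAt lam ((1 - 2 * d) / d * mu t * lam t) t :=
      hlam.congr_deriv (by ring)
    convert hlam'.rpow_const_of_eq_mul_self (2 * d / (1 - 2 * d)) hpos using 1
    field_simp
  have hquad : HasDerivAt (fun x => mu x ^ 2 + d ^ 2 * lam x ^ 2 - 1)
      (-(2 * mu t) * (mu t ^ 2 + d ^ 2 * lam t ^ 2 - 1)) t := by
    refine (((hmu.pow 2).add ((hlam.pow 2).const_mul (d ^ 2))).sub_const 1).congr_deriv ?_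
    field_simp
    ring
  refine (hpow.mul hquad).congr_deriv ?_
  ring

/-- First integral of the ODE system for Lagrangian submanifolds of ℂHⁿ(-4):
if `λ > 0`, `λ' = ((1-2d)/d)·λ·μ` and `μ' = 1 - μ² - d(1-d)·λ²`, then
`λ^(2d/(1-2d))·(μ² + d²·λ² - 1)` is constant on `I`; in particular the sign of
`μ² + d²·λ² - 1` is constant on `I`. -/
theorem stmt_4 (d : ℝ) (hd0 : d ≠ 0) (hd2 : d ≠ 1 / 2)
    (a b : ℝ) (lam mu : ℝ → ℝ)
    (hpos : ∀ t ∈ Set.Ioo a b, 0 < lam t)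
    (hlam : ∀ t ∈ Set.Ioo a b,
      HasDerivAt lam ((1 - 2 * d) / d * lam t * mu t) t)
    (hmu : ∀ t ∈ Set.Ioo a b,
      HasDerivAt mu (1 - (mu t) ^ 2 - d * (1 - d) * (lam t) ^ 2) t) :
    (∀ s ∈ Set.Ioo a b, ∀ t ∈ Set.Ioo a b,
      lam s ^ (2 * d / (1 - 2 * d)) * ((mu s) ^ 2 + d ^ 2 * (lam s) ^ 2 - 1) =
      lam t ^ (2 * d / (1 - 2 * d)) * ((mu t) ^ 2 + d ^ 2 * (lam t) ^ 2 - 1)) ∧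
    (∀ s ∈ Set.Ioo a b, ∀ t ∈ Set.Ioo a b,
      ((0 < (mu s) ^ 2 + d ^ 2 * (lam s) ^ 2 - 1 ↔
        0 < (mu t) ^ 2 + d ^ 2 * (lam t) ^ 2 - 1) ∧
       ((mu s) ^ 2 + d ^ 2 * (lam s) ^ 2 - 1 = 0 ↔
        (mu t) ^ 2 + d ^ 2 * (lam t) ^ 2 - 1 = 0))) := by
  have hconst := isOpen_Ioo.is_const_of_hasDerivAt_zero isPreconnected_Ioo fun t ht =>
    hasDerivAt_firstIntegral hd0 hd2 (hpos t ht) (hlam t ht) (hmu t ht)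
  refine ⟨hconst, fun s hs t ht => ?_⟩
  exact pos_iff_and_eq_zero_iff_of_mul_eq_mul (Real.rpow_pos_of_pos (hpos s hs) _)
    (Real.rpow_pos_of_pos (hpos t ht) _) (hconst s hs t ht)
end

section
/- Let λ, μ : I → ℝ be positive differentiable functions with λ' = ((1-2d)/d)·λ·μ for d ∉ {0, 1/2}, and suppose c + μ² + d²λ² satisfies (c + μ² + d²λ²)' = -2μ·(c + μ² + d²λ²). Then (λ^{2d/(1-2d)}·(c + μ² + d²λ²))' = 0 on I. -/
/-! If `λ' = λ·g` then `(λ^p)' = p·g·λ^p`, so `λ^p·F` has derivative `p·g·λ^p·F + λ^p·F'`,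
which vanishes as soon as `F' = -p·g·F`. The ODE `λ' = ((1-2d)/d)·λ·μ` is of this form with
`g = ((1-2d)/d)·μ`, and `p = 2d/(1-2d)` makes `p·g = 2μ`. -/

theorem HasDerivAt.rpow_const_of_eq_mul {f : ℝ → ℝ} {g x : ℝ} (p : ℝ)
    (hf : HasDerivAt f (f x * g) x) (hx : 0 < f x) :
    HasDerivAt (fun s => f s ^ p) (p * g * f x ^ p) x := by
  convert hf.rpow_const (p := p) (Or.inl hx.ne') using 1
  rw [Real.rpow_sub_one hx.ne']
  field_simp

theorem HasDerivAt.rpow_mul_eq_zero {f F : ℝ → ℝ} {g x p : ℝ}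
    (hf : HasDerivAt f (f x * g) x) (hx : 0 < f x)
    (hF : HasDerivAt F (-(p * g) * F x) x) :
    HasDerivAt (fun s => f s ^ p * F s) 0 x :=
  ((hf.rpow_const_of_eq_mul p hx).mul hF).congr_deriv (by ring)

theorem stmt_16_general (d c : ℝ) (hd0 : d ≠ 0) (hd2 : d ≠ 1 / 2)
    (a b : ℝ) (lam mu : ℝ → ℝ)
    (hpos : ∀ t ∈ Set.Ioo a b, 0 < lam t)
    (hlam : ∀ t ∈ Set.Ioo a b,
      HasDerivAt lam ((1 - 2 * d) / d * lam t * mu t) t)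
    (hF : ∀ t ∈ Set.Ioo a b,
      HasDerivAt (fun s => c + (mu s) ^ 2 + d ^ 2 * (lam s) ^ 2)
        (-2 * mu t * (c + (mu t) ^ 2 + d ^ 2 * (lam t) ^ 2)) t) :
    ∀ t ∈ Set.Ioo a b,
      HasDerivAt
        (fun s => lam s ^ (2 * d / (1 - 2 * d)) *
          (c + (mu s) ^ 2 + d ^ 2 * (lam s) ^ 2)) 0 t := by
  intro t ht
  have h12d : 1 - 2 * d ≠ 0 := fun h => hd2 (by linarith)
  have hexp : 2 * d / (1 - 2 * d) * ((1 - 2 * d) / d * mu t) = 2 * mu t := by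
    field_simp
  refine HasDerivAt.rpow_mul_eq_zero (g := (1 - 2 * d) / d * mu t) ?_ (hpos t ht) ?_
  · convert hlam t ht using 1
    ring
  · convert hF t ht using 2
    rw [hexp, neg_mul]

/-- General conserved quantity covering all ambient curvatures `c`: if `λ > 0`,
`λ' = ((1-2d)/d)·λ·μ` and `F = c + μ² + d²λ²` satisfies `F' = -2μ·F`, then
`(λ^(2d/(1-2d))·F)' = 0` on the interval. -/
theorem stmt_16 (d c : ℝ) (hd0 : d ≠ 0) (hd2 : d ≠ 1 / 2)
    (a b : ℝ) (lam mu : ℝ → ℝ)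
    (hpos : ∀ t ∈ Set.Ioo a b, 0 < lam t)
    (hmupos : ∀ t ∈ Set.Ioo a b, 0 < mu t)
    (hlam : ∀ t ∈ Set.Ioo a b,
      HasDerivAt lam ((1 - 2 * d) / d * lam t * mu t) t)
    (hF : ∀ t ∈ Set.Ioo a b,
      HasDerivAt (fun s => c + (mu s) ^ 2 + d ^ 2 * (lam s) ^ 2)
        (-2 * mu t * (c + (mu t) ^ 2 + d ^ 2 * (lam t) ^ 2)) t) :
    ∀ t ∈ Set.Ioo a b,
      HasDerivAt
        (fun s => lam s ^ (2 * d / (1 - 2 * d)) *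
          (c + (mu s) ^ 2 + d ^ 2 * (lam s) ^ 2)) 0 t :=
  stmt_16_general d c hd0 hd2 a b lam mu hpos hlam hF
end
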